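/- arXiv:2007.01615 — 2 statements merged into one kernel-verified Lean document; each statement's English description precedes it below -/
import Mathlib

section
/- Let A and B be positive definite matrices of the same order and C a matrix of compatible dimensions. Then the unique solution X of the Sylvester equation AX + XB = C is given by X = ∫₀^∞ e^{−tA} C e^{−tB} dt. -/
open scoped Matrix.Norms.L2Operator
open MeasureTheory

open NormedSpace Matrix in
/-- The continuous linear map `M ↦ M *ᵥ v` into Euclidean space. -/
noncomputable def Sylvester.mulVecCLM {p : ℕ} (v : Fin p → ℝ) :
    Matrix (Fin p) (Fin p) ℝ →L[ℝ] EuclideanSpace ℝ (Fin p) :=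
  LinearMap.toContinuousLinearMap
    { toFun := fun M => (WithLp.equiv 2 (Fin p → ℝ)).symm (M *ᵥ v)
      map_add' := fun M N => by simp [Matrix.add_mulVec]
      map_smul' := fun s M => by simp [Matrix.smul_mulVec] }

open NormedSpace Matrix in
@[simp] lemma Sylvester.mulVecCLM_apply {p : ℕ} (v : Fin p → ℝ)
    (M : Matrix (Fin p) (Fin p) ℝ) :
    Sylvester.mulVecCLM v M = (WithLp.equiv 2 (Fin p → ℝ)).symm (M *ᵥ v) := rfl

open NormedSpace Matrix in
lemma Sylvester.coercive {p : ℕ} {A : Matrix (Fin p) (Fin p) ℝ} (hA : A.PosDef) :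
    ∃ c > 0, ∀ v : EuclideanSpace ℝ (Fin p),
      c * ‖v‖ ^ 2 ≤ (v : Fin p → ℝ) ⬝ᵥ (A *ᵥ (v : Fin p → ℝ)) := by
  rcases Nat.eq_zero_or_pos p with hp | hp
  · refine ⟨1, one_pos, fun v => ?_⟩
    subst hp
    have : v = 0 := Subsingleton.elim _ _
    simp [this, dotProduct]
  · have hcont : Continuous fun v : EuclideanSpace ℝ (Fin p) =>
        (v : Fin p → ℝ) ⬝ᵥ (A *ᵥ (v : Fin p → ℝ)) := by
      simp only [dotProduct, Matrix.mulVec]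
      fun_prop
    have hne : (Metric.sphere (0 : EuclideanSpace ℝ (Fin p)) 1).Nonempty := by
      refine ⟨EuclideanSpace.single ⟨0, hp⟩ 1, ?_⟩
      simp [EuclideanSpace.norm_single]
    obtain ⟨v₀, hv₀S, hmin⟩ := (isCompact_sphere (0 : EuclideanSpace ℝ (Fin p)) 1).exists_isMinOn
      hne hcont.continuousOn
    have hv₀ : v₀ ≠ 0 := by
      intro h
      have := mem_sphere_zero_iff_norm.mp hv₀S
      rw [h] at this; simp at this
    refine ⟨_, by simpa using hA.dotProduct_mulVec_pos (x := (v₀ : Fin p → ℝ)) (fun h => hv₀ (by ext i; exact congrFun h i)), fun v => ?_⟩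
    rcases eq_or_ne v 0 with rfl | hv
    · simp [dotProduct]
    · have hnv : (0:ℝ) < ‖v‖ := norm_pos_iff.mpr hv
      set u : EuclideanSpace ℝ (Fin p) := ‖v‖⁻¹ • v with hu
      have huS : u ∈ Metric.sphere (0 : EuclideanSpace ℝ (Fin p)) 1 := by
        simp [hu, norm_smul, abs_of_nonneg (norm_nonneg v), inv_mul_cancel₀ hnv.ne']
      have h1 : (v₀ : Fin p → ℝ) ⬝ᵥ (A *ᵥ (v₀ : Fin p → ℝ))
          ≤ (u : Fin p → ℝ) ⬝ᵥ (A *ᵥ (u : Fin p → ℝ)) := hmin huS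
      have hexp : (u : Fin p → ℝ) ⬝ᵥ (A *ᵥ (u : Fin p → ℝ))
          = ‖v‖⁻¹ ^ 2 * ((v : Fin p → ℝ) ⬝ᵥ (A *ᵥ (v : Fin p → ℝ))) := by
        show ((‖v‖⁻¹ • (v : Fin p → ℝ)) ⬝ᵥ (A *ᵥ (‖v‖⁻¹ • (v : Fin p → ℝ)))) = _
        rw [Matrix.mulVec_smul, smul_dotProduct, dotProduct_smul,
          smul_eq_mul, smul_eq_mul]
        ring
      rw [hexp] at h1
      have h3 : (0:ℝ) < ‖v‖ ^ 2 := by positivity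
      have h4 : ‖v‖⁻¹ ^ 2 = (‖v‖ ^ 2)⁻¹ := by rw [inv_pow]
      rw [h4] at h1
      calc (v₀ : Fin p → ℝ) ⬝ᵥ (A *ᵥ (v₀ : Fin p → ℝ)) * ‖v‖ ^ 2
          ≤ (‖v‖ ^ 2)⁻¹ * ((v : Fin p → ℝ) ⬝ᵥ (A *ᵥ (v : Fin p → ℝ))) * ‖v‖ ^ 2 := by
            exact mul_le_mul_of_nonneg_right h1 h3.le
        _ = (v : Fin p → ℝ) ⬝ᵥ (A *ᵥ (v : Fin p → ℝ)) := by field_simp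

lemma Sylvester.hasDerivAt_norm_sq {E : Type*} [NormedAddCommGroup E] [InnerProductSpace ℝ E]
    {w : ℝ → E} {w' : E} {s : ℝ} (h : HasDerivAt w w' s) :
    HasDerivAt (fun u => ‖w u‖ ^ 2) (2 * inner ℝ (w s) w') s := by
  have h1 : HasDerivAt (fun u => (inner ℝ (w u) (w u) : ℝ))
      (inner ℝ (w s) w' + inner ℝ w' (w s)) s := h.inner ℝ h
  have h2 : (fun u => (inner ℝ (w u) (w u) : ℝ)) = fun u => ‖w u‖ ^ 2 := by
    ext u; exact real_inner_self_eq_norm_sq (w u)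
  rw [h2] at h1
  convert h1 using 1
  rw [real_inner_comm w' (w s)]; ring

open NormedSpace Matrix in
set_option maxHeartbeats 1000000 in
lemma Sylvester.decay_vec {p : ℕ} {A : Matrix (Fin p) (Fin p) ℝ} {c : ℝ}
    (hcoer : ∀ v : EuclideanSpace ℝ (Fin p),
      c * ‖v‖ ^ 2 ≤ (v : Fin p → ℝ) ⬝ᵥ (A *ᵥ (v : Fin p → ℝ)))
    (v : EuclideanSpace ℝ (Fin p)) {t : ℝ} (ht : 0 ≤ t) :
    ‖Sylvester.mulVecCLM (v : Fin p → ℝ) (exp (t • (-A)))‖ ≤ Real.exp (-(c * t)) * ‖v‖ := by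
  set g : ℝ → EuclideanSpace ℝ (Fin p) :=
    fun s => Sylvester.mulVecCLM (v : Fin p → ℝ) (exp (s • (-A))) with hgdef
  have hg : ∀ s, HasDerivAt g
      (Sylvester.mulVecCLM (v : Fin p → ℝ) ((-A) * exp (s • (-A)))) s := fun s =>
    (Sylvester.mulVecCLM (v : Fin p → ℝ)).hasFDerivAt.comp_hasDerivAt s
      (hasDerivAt_exp_smul_const' (-A) s)
  have hg' : ∀ s, Sylvester.mulVecCLM (v : Fin p → ℝ) ((-A) * exp (s • (-A)))
      = -((WithLp.equiv 2 (Fin p → ℝ)).symm (A *ᵥ ((g s : Fin p → ℝ)))) := by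
    intro s
    rw [Sylvester.mulVecCLM_apply, ← Matrix.mulVec_mulVec, Matrix.neg_mulVec]
    rfl
  set f : ℝ → ℝ := fun s => ‖g s‖ ^ 2 with hfdef
  have hf : ∀ s, HasDerivAt f (-(2 * ((g s : Fin p → ℝ) ⬝ᵥ (A *ᵥ (g s : Fin p → ℝ))))) s := by
    intro s
    have h1 := Sylvester.hasDerivAt_norm_sq (hg s)
    convert h1 using 1
    rw [hg' s, inner_neg_right]
    have : (inner ℝ (g s) ((WithLp.equiv 2 (Fin p → ℝ)).symm (A *ᵥ (g s : Fin p → ℝ))) : ℝ)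
        = (g s : Fin p → ℝ) ⬝ᵥ (A *ᵥ (g s : Fin p → ℝ)) := by
      simp [PiLp.inner_apply, dotProduct, WithLp.equiv_symm_apply, mul_comm]
    rw [this]; ring
  set h₀ : ℝ → ℝ := fun s => Real.exp (2 * c * s) * f s with hh0
  have hh : ∀ s, HasDerivAt h₀ (2 * c * Real.exp (2 * c * s) * f s
      + Real.exp (2 * c * s) * (-(2 * ((g s : Fin p → ℝ) ⬝ᵥ (A *ᵥ (g s : Fin p → ℝ)))))) s := by
    intro s
    have he : HasDerivAt (fun u => Real.exp (2 * c * u)) (Real.exp (2 * c * s) * (2 * c)) s := by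
      simpa using ((hasDerivAt_id s).const_mul (2 * c)).exp
    refine (he.mul (hf s)).congr_deriv ?_
    ring
  have hcontg : Continuous g := by
    apply (Sylvester.mulVecCLM (v : Fin p → ℝ)).continuous.comp
    exact (continuous_iff_continuousAt.2 fun x => (exp_analytic (𝕂 := ℝ) x).continuousAt).comp (by fun_prop)
  have hmono : AntitoneOn h₀ (Set.Ici (0:ℝ)) := by
    apply antitoneOn_of_deriv_nonpos (convex_Ici 0)
    · have hcf : Continuous f := by fun_prop
      fun_prop
    · intro s _
      exact (hh s).differentiableAt.differentiableWithinAt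
    · intro s _
      rw [(hh s).deriv]
      have hfs : f s = ‖g s‖ ^ 2 := rfl
      have hmul := mul_le_mul_of_nonneg_left (hcoer (g s)) (Real.exp_pos (2 * c * s)).le
      rw [hfs]
      nlinarith [hmul]
  have key : h₀ t ≤ h₀ 0 := hmono Set.self_mem_Ici ht ht
  have h00 : h₀ 0 = ‖v‖ ^ 2 := by
    simp only [hh0, hfdef, hgdef, mul_zero, Real.exp_zero, one_mul, zero_smul, exp_zero,
      Sylvester.mulVecCLM_apply, Matrix.one_mulVec]
    rfl
  have hft : f t ≤ Real.exp (-(2 * c * t)) * ‖v‖ ^ 2 := by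
    rw [h00] at key
    have hepos := Real.exp_pos (2 * c * t)
    rw [Real.exp_neg]
    exact (le_inv_mul_iff₀ hepos).mpr key
  have hsq : ‖g t‖ ^ 2 ≤ (Real.exp (-(c * t)) * ‖v‖) ^ 2 := by
    calc ‖g t‖ ^ 2 = f t := rfl
      _ ≤ Real.exp (-(2 * c * t)) * ‖v‖ ^ 2 := hft
      _ = (Real.exp (-(c * t)) * ‖v‖) ^ 2 := by
          rw [mul_pow, ← Real.exp_nat_mul]
          ring_nf
  have hnn : (0:ℝ) ≤ Real.exp (-(c * t)) * ‖v‖ := by positivity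
  nlinarith [norm_nonneg (g t), hnn, hsq]

open NormedSpace Matrix in
lemma Sylvester.op_decay {p : ℕ} {A : Matrix (Fin p) (Fin p) ℝ} (hA : A.PosDef) :
    ∃ c > 0, ∀ t : ℝ, 0 ≤ t → ‖exp (-(t • A))‖ ≤ Real.exp (-(c * t)) := by
  obtain ⟨c, hc, hcoer⟩ := Sylvester.coercive hA
  refine ⟨c, hc, fun t ht => ?_⟩
  rw [← smul_neg, Matrix.l2_opNorm_def]
  exact ContinuousLinearMap.opNorm_le_bound _ (Real.exp_nonneg _)
    (fun x => Sylvester.decay_vec hcoer x ht)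

open NormedSpace Matrix in
lemma Sylvester.exists_solution {p : ℕ} {A B : Matrix (Fin p) (Fin p) ℝ}
    (hA : A.PosDef) (hB : B.PosDef) (C : Matrix (Fin p) (Fin p) ℝ) :
    A * (∫ t in Set.Ioi (0 : ℝ), exp (-(t • A)) * C * exp (-(t • B)))
      + (∫ t in Set.Ioi (0 : ℝ), exp (-(t • A)) * C * exp (-(t • B))) * B = C := by
  obtain ⟨c₁, hc₁, hdA⟩ := Sylvester.op_decay hA
  obtain ⟨c₂, hc₂, hdB⟩ := Sylvester.op_decay hB
  set F : ℝ → Matrix (Fin p) (Fin p) ℝ :=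
    fun t => exp (-(t • A)) * C * exp (-(t • B)) with hFdef
  have hFcont : Continuous F :=
    (((continuous_iff_continuousAt.2 fun x => (exp_analytic (𝕂 := ℝ) x).continuousAt).comp (by fun_prop : Continuous fun t : ℝ => -(t • A))).mul
      continuous_const).mul ((continuous_iff_continuousAt.2 fun x => (exp_analytic (𝕂 := ℝ) x).continuousAt).comp (by fun_prop : Continuous fun t : ℝ => -(t • B)))
  have hFle : ∀ t : ℝ, 0 ≤ t → ‖F t‖ ≤ ‖C‖ * Real.exp (-(c₁ + c₂) * t) := by
    intro t ht
    calc ‖F t‖ ≤ ‖exp (-(t • A)) * C‖ * ‖exp (-(t • B))‖ := norm_mul_le _ _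
      _ ≤ ‖exp (-(t • A))‖ * ‖C‖ * ‖exp (-(t • B))‖ :=
          mul_le_mul_of_nonneg_right (norm_mul_le _ _) (norm_nonneg _)
      _ ≤ Real.exp (-(c₁ * t)) * ‖C‖ * Real.exp (-(c₂ * t)) := by
          apply mul_le_mul
          · exact mul_le_mul_of_nonneg_right (hdA t ht) (norm_nonneg _)
          · exact hdB t ht
          · exact norm_nonneg _
          · positivity
      _ = ‖C‖ * Real.exp (-(c₁ + c₂) * t) := by
          have hxe : Real.exp (-(c₁ * t)) * Real.exp (-(c₂ * t))
              = Real.exp (-(c₁ + c₂) * t) := by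
            rw [← Real.exp_add]; congr 1; ring
          rw [← hxe]; ring
  have hgint : IntegrableOn (fun t : ℝ => ‖C‖ * Real.exp (-(c₁ + c₂) * t)) (Set.Ioi 0) := by
    exact (exp_neg_integrableOn_Ioi 0 (by linarith : (0:ℝ) < c₁ + c₂)).const_mul ‖C‖
  have hFint : IntegrableOn F (Set.Ioi 0) := by
    refine Integrable.mono' hgint hFcont.aestronglyMeasurable.restrict ?_
    refine (ae_restrict_iff' measurableSet_Ioi).mpr (ae_of_all _ fun t ht => ?_)
    exact hFle t (le_of_lt ht)
  have hderiv : ∀ t : ℝ, HasDerivAt F (-(A * F t + F t * B)) t := by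
    intro t
    have hFrw : F = fun s : ℝ => exp (s • (-A)) * C * exp (s • (-B)) := by
      funext s; rw [hFdef]; simp [smul_neg]
    rw [hFrw]
    have hd := ((hasDerivAt_exp_smul_const' (-A) t).mul_const C).mul
      (hasDerivAt_exp_smul_const (-B) t)
    refine hd.congr_deriv (Eq.symm ?_)
    rw [← hFrw]
    show -(A * F t + F t * B) = _
    have hFt : F t = exp (t • (-A)) * C * exp (t • (-B)) := by rw [hFrw]
    rw [hFt]
    noncomm_ring
  have hF'le : ∀ t : ℝ, 0 ≤ t → ‖-(A * F t + F t * B)‖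
      ≤ ((‖A‖ + ‖B‖) * ‖C‖) * Real.exp (-(c₁ + c₂) * t) := by
    intro t ht
    have h1 : ‖-(A * F t + F t * B)‖ ≤ ‖A‖ * ‖F t‖ + ‖F t‖ * ‖B‖ := by
      rw [norm_neg]
      exact (norm_add_le _ _).trans (add_le_add (norm_mul_le _ _) (norm_mul_le _ _))
    have h2 := hFle t ht
    have hnC : (0:ℝ) ≤ ‖C‖ * Real.exp (-(c₁ + c₂) * t) := by positivity
    nlinarith [norm_nonneg A, norm_nonneg B, norm_nonneg (F t)]
  have hF'int : IntegrableOn (fun t => -(A * F t + F t * B)) (Set.Ioi 0) := by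
    have hg2 : IntegrableOn
        (fun t : ℝ => ((‖A‖ + ‖B‖) * ‖C‖) * Real.exp (-(c₁ + c₂) * t)) (Set.Ioi 0) := by
      exact (exp_neg_integrableOn_Ioi 0 (by linarith : (0:ℝ) < c₁ + c₂)).const_mul
        ((‖A‖ + ‖B‖) * ‖C‖)
    have hcont2 : Continuous fun t => -(A * F t + F t * B) := by
      apply Continuous.neg
      exact (continuous_const.mul hFcont).add (hFcont.mul continuous_const)
    refine Integrable.mono' hg2 hcont2.aestronglyMeasurable.restrict ?_
    refine (ae_restrict_iff' measurableSet_Ioi).mpr (ae_of_all _ fun t ht => ?_)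
    exact hF'le t (le_of_lt ht)
  have htend : Filter.Tendsto F Filter.atTop (nhds 0) := by
    have h1 : Filter.Tendsto (fun t : ℝ => -(c₁ + c₂) * t) Filter.atTop Filter.atBot := by
      have h0 := (Filter.tendsto_id.const_mul_atTop (by linarith : (0:ℝ) < c₁ + c₂))
      have h2 := Filter.tendsto_neg_atTop_atBot.comp h0
      exact Filter.Tendsto.congr (fun x => by simp only [Function.comp_apply, id_eq]; ring) h2
    have h3 : Filter.Tendsto (fun t : ℝ => ‖C‖ * Real.exp (-(c₁ + c₂) * t))
        Filter.atTop (nhds (‖C‖ * 0)) := (Real.tendsto_exp_atBot.comp h1).const_mul ‖C‖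
    rw [mul_zero] at h3
    refine squeeze_zero_norm' ?_ h3
    filter_upwards [Filter.eventually_ge_atTop (0:ℝ)] with t ht
    exact hFle t ht
  have key := integral_Ioi_of_hasDerivAt_of_tendsto' (f := F)
    (f' := fun t => -(A * F t + F t * B)) (fun t _ => hderiv t) hF'int htend
  have hF0 : F 0 = C := by
    rw [hFdef]; simp
  rw [hF0, zero_sub] at key
  set X₀ := ∫ t in Set.Ioi (0:ℝ), F t with hX₀
  let L : Matrix (Fin p) (Fin p) ℝ →L[ℝ] Matrix (Fin p) (Fin p) ℝ :=
    ContinuousLinearMap.mul ℝ _ A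
  let R : Matrix (Fin p) (Fin p) ℝ →L[ℝ] Matrix (Fin p) (Fin p) ℝ :=
    (ContinuousLinearMap.mul ℝ (Matrix (Fin p) (Fin p) ℝ)).flip B
  have hsplit : (∫ t in Set.Ioi (0:ℝ), -(A * F t + F t * B)) = -(A * X₀ + X₀ * B) := by
    rw [integral_neg]
    congr 1
    have h1 : (∫ t in Set.Ioi (0:ℝ), (A * F t + F t * B))
        = (∫ t in Set.Ioi (0:ℝ), L (F t)) + ∫ t in Set.Ioi (0:ℝ), R (F t) :=
      integral_add (L.integrable_comp hFint) (R.integrable_comp hFint)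
    rw [h1, L.integral_comp_comm hFint, R.integral_comp_comm hFint]
    rfl
  rw [hsplit] at key
  have := neg_injective key
  exact this

/-- Solution of the Sylvester equation: if `A` and `B` are positive definite matrices, then
`X` solves `AX + XB = C` if and only if `X = ∫₀^∞ e^{−tA} C e^{−tB} dt`; in particular the
solution exists and is unique. -/
theorem sylvester_equation_solution
    {p : ℕ} (A B C : Matrix (Fin p) (Fin p) ℝ)
    (hA : A.PosDef) (hB : B.PosDef) :
    ∀ X : Matrix (Fin p) (Fin p) ℝ,
      A * X + X * B = C ↔
        X = ∫ t in Set.Ioi (0 : ℝ),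
          NormedSpace.exp (-(t • A)) * C * NormedSpace.exp (-(t • B)) := by
  intro X
  have hX₀ := Sylvester.exists_solution hA hB C
  constructor
  · intro hX
    let Lm : Matrix (Fin p) (Fin p) ℝ →ₗ[ℝ] Matrix (Fin p) (Fin p) ℝ :=
      { toFun := fun Y => A * Y + Y * B
        map_add' := fun Y Z => by noncomm_ring
        map_smul' := fun s Y => by
          simp [Matrix.mul_smul, Matrix.smul_mul, smul_add] }
    have hsurj : Function.Surjective Lm := fun C' =>
      ⟨_, Sylvester.exists_solution hA hB C'⟩
    have hinj : Function.Injective Lm := (LinearMap.injective_iff_surjective).mpr hsurj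
    exact hinj (show Lm X = Lm _ from hX.trans hX₀.symm)
  · rintro rfl
    exact hX₀
end

section
/- Let y be a Bernoulli random variable with success probability p ∈ (δ₂, δ₁) for some 0 < δ₂ ≤ δ₁ < 1, and let V be a continuous real random variable independent of y with E V = 0, E V² = 1. Define U = ((y − p)V, (y − p)²(V² − 1)) ∈ ℝ². If the law of (V, V² − 1) satisfies Cramér's condition limsup_{‖t‖→∞} |E e^{i t'(V, V²−1)}| < 1, then the law of U satisfies limsup_{‖t‖→∞} |E e^{i t'U}| < 1. -/
open MeasureTheory ProbabilityTheory Filter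

lemma indep_smul_integral {Ω : Type*} [MeasurableSpace Ω] {μ : Measure Ω} [IsProbabilityMeasure μ]
    {X : Ω → ℝ} {W : Ω → ℂ} (h : IndepFun X W μ)
    (hXm : AEStronglyMeasurable X μ) (hWm : AEStronglyMeasurable W μ)
    (hWi : Integrable W μ)
    (hXWi : Integrable (fun ω => X ω • W ω) μ) :
    ∫ ω, X ω • W ω ∂μ = (∫ ω, X ω ∂μ) • ∫ ω, W ω ∂μ := by
  have hWre : AEStronglyMeasurable (fun ω => (W ω).re) μ :=
    Complex.continuous_re.comp_aestronglyMeasurable hWm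
  have hWim : AEStronglyMeasurable (fun ω => (W ω).im) μ :=
    Complex.continuous_im.comp_aestronglyMeasurable hWm
  have hre : IndepFun X (fun ω => (W ω).re) μ := h.comp measurable_id Complex.measurable_re
  have him : IndepFun X (fun ω => (W ω).im) μ := h.comp measurable_id Complex.measurable_im
  have e1 : ∫ ω, X ω * (W ω).re ∂μ = (∫ ω, X ω ∂μ) * ∫ ω, (W ω).re ∂μ :=
    hre.integral_mul_eq_mul_integral hXm hWre
  have e2 : ∫ ω, X ω * (W ω).im ∂μ = (∫ ω, X ω ∂μ) * ∫ ω, (W ω).im ∂μ :=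
    him.integral_mul_eq_mul_integral hXm hWim
  have h1 := integral_re_add_im (𝕜 := ℂ) hXWi
  have h2 := integral_re_add_im (𝕜 := ℂ) hWi
  simp only [RCLike.re_to_complex, RCLike.im_to_complex, RCLike.I_to_complex,
    Complex.smul_re, Complex.smul_im, smul_eq_mul] at h1 h2
  rw [← h1, ← h2, e1, e2, Complex.real_smul]
  push_cast
  simp [mul_comm, mul_assoc, mul_left_comm, mul_add]

/-- Transfer of Cramér's condition: if `y` is Bernoulli(`p`) with `p ∈ (δ₂, δ₁)`,
`0 < δ₂ ≤ δ₁ < 1`, and `V` is a continuous real random variable independent of `y` with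
`E V = 0`, `E V² = 1`, such that `(V, V² − 1)` satisfies Cramér's condition, then
`U = ((y − p)V, (y − p)²(V² − 1))` also satisfies Cramér's condition. -/
theorem cramer_condition_transfer
    {Ω : Type*} [MeasurableSpace Ω] (μ : Measure Ω) [IsProbabilityMeasure μ]
    (y V : Ω → ℝ) (hy : Measurable y) (hV : Measurable V)
    (δ₁ δ₂ : ℝ) (hδ₂ : 0 < δ₂) (hδ : δ₂ ≤ δ₁) (hδ₁ : δ₁ < 1)
    (p : ℝ) (hp₂ : δ₂ < p) (hp₁ : p < δ₁)
    (hBer : ∀ᵐ ω ∂μ, y ω = 0 ∨ y ω = 1)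
    (hyp : μ {ω | y ω = 1} = ENNReal.ofReal p)
    (hVcont : ∀ x : ℝ, μ {ω | V ω = x} = 0)
    (hindep : IndepFun y V μ)
    (hVmean : ∫ ω, V ω ∂μ = 0)
    (hVvar : ∫ ω, (V ω) ^ 2 ∂μ = 1)
    (hCramerV : Filter.limsup
        (fun t : ℝ × ℝ =>
          ‖∫ ω, Complex.exp (Complex.I * ((t.1 * V ω + t.2 * (V ω ^ 2 - 1) : ℝ) : ℂ)) ∂μ‖)
        (Filter.comap (fun t : ℝ × ℝ => ‖t‖) Filter.atTop) < 1) :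
    Filter.limsup
        (fun t : ℝ × ℝ =>
          ‖∫ ω, Complex.exp (Complex.I *
            ((t.1 * ((y ω - p) * V ω) +
              t.2 * ((y ω - p) ^ 2 * (V ω ^ 2 - 1)) : ℝ) : ℂ)) ∂μ‖)
        (Filter.comap (fun t : ℝ × ℝ => ‖t‖) Filter.atTop) < 1 := by
  have hp0 : 0 < p := hδ₂.trans hp₂
  have hp1 : p < 1 := hp₁.trans_le (le_of_lt hδ₁)
  have hq0 : 0 < 1 - p := by linarith
  set l : Filter (ℝ × ℝ) := Filter.comap (fun t : ℝ × ℝ => ‖t‖) Filter.atTop with hl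
  set f : ℝ × ℝ → ℝ := fun s =>
    ‖∫ ω, Complex.exp (Complex.I * ((s.1 * V ω + s.2 * (V ω ^ 2 - 1) : ℝ) : ℂ)) ∂μ‖ with hf
  -- the characteristic-function integrand
  set g : ℝ × ℝ → ℝ → ℂ := fun s x =>
    Complex.exp (Complex.I * ((s.1 * x + s.2 * (x ^ 2 - 1) : ℝ) : ℂ)) with hgdef
  have hg_cont : ∀ s, Continuous (g s) := by
    intro s
    apply Complex.continuous_exp.comp
    exact continuous_const.mul (Complex.continuous_ofReal.comp (by continuity))
  have hg_norm : ∀ s x, ‖g s x‖ = 1 := by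
    intro s x
    simp only [hgdef]
    rw [mul_comm]
    exact Complex.norm_exp_ofReal_mul_I _
  have hInt : ∀ (W : Ω → ℂ), Measurable W → (∀ ω, ‖W ω‖ ≤ 1) → Integrable W μ := by
    intro W hm hb
    exact ⟨hm.aestronglyMeasurable, HasFiniteIntegral.of_bounded (C := 1) (ae_of_all _ hb)⟩
  -- indicator functions
  set h1 : ℝ → ℝ := fun x => if x = 1 then 1 else 0 with hh1def
  set h0 : ℝ → ℝ := fun x => if x = 1 then 0 else 1 with hh0def
  have hh1 : Measurable h1 := by
    apply Measurable.ite _ measurable_const measurable_const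
    exact measurableSet_eq
  have hh0 : Measurable h0 := by
    apply Measurable.ite _ measurable_const measurable_const
    exact measurableSet_eq
  have hAmeas : MeasurableSet {ω | y ω = 1} := hy (measurableSet_singleton 1)
  have hint_h1 : ∫ ω, h1 (y ω) ∂μ = p := by
    have : (fun ω => h1 (y ω)) = Set.indicator {ω | y ω = 1} (fun _ => (1 : ℝ)) := by
      ext ω
      by_cases hω : y ω = 1 <;> simp [hh1def, hω]
    rw [this, integral_indicator_const _ hAmeas, measureReal_def, hyp, ENNReal.toReal_ofReal hp0.le]
    simp
  have hint_h0 : ∫ ω, h0 (y ω) ∂μ = 1 - p := by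
    have hsub : (fun ω => h0 (y ω)) = fun ω => 1 - h1 (y ω) := by
      ext ω; by_cases hω : y ω = 1 <;> simp [hh0def, hh1def, hω]
    have hi1 : Integrable (fun ω => h1 (y ω)) μ := by
      refine ⟨(hh1.comp hy).aestronglyMeasurable,
        HasFiniteIntegral.of_bounded (C := 1) (ae_of_all _ fun ω => ?_)⟩
      by_cases hω : y ω = 1 <;> simp [hh1def, hω]
    rw [hsub, integral_sub (integrable_const 1) hi1, hint_h1]
    simp
  -- key pointwise bound
  have claim : ∀ t : ℝ × ℝ,
      ‖∫ ω, Complex.exp (Complex.I *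
        ((t.1 * ((y ω - p) * V ω) + t.2 * ((y ω - p) ^ 2 * (V ω ^ 2 - 1)) : ℝ) : ℂ)) ∂μ‖
      ≤ p * f ((1 - p) * t.1, (1 - p) ^ 2 * t.2) + (1 - p) * f (-p * t.1, p ^ 2 * t.2) := by
    intro t
    set P1 : ℝ × ℝ := ((1 - p) * t.1, (1 - p) ^ 2 * t.2) with hP1
    set P2 : ℝ × ℝ := (-p * t.1, p ^ 2 * t.2) with hP2
    have hgm1 : Measurable (g P1) := (hg_cont P1).measurable
    have hgm2 : Measurable (g P2) := (hg_cont P2).measurable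
    have hGi : ∀ s : ℝ × ℝ, Integrable (fun ω => g s (V ω)) μ := fun s =>
      hInt _ ((hg_cont s).measurable.comp hV) (fun ω => le_of_eq (hg_norm s (V ω)))
    have heq : (fun ω => Complex.exp (Complex.I *
        ((t.1 * ((y ω - p) * V ω) + t.2 * ((y ω - p) ^ 2 * (V ω ^ 2 - 1)) : ℝ) : ℂ)))
        =ᵐ[μ] fun ω => h1 (y ω) • g P1 (V ω) + h0 (y ω) • g P2 (V ω) := by
      filter_upwards [hBer] with ω hω
      rcases hω with h | h
      · have he : (t.1 * ((y ω - p) * V ω) + t.2 * ((y ω - p) ^ 2 * (V ω ^ 2 - 1)) : ℝ)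
            = (P2.1 * V ω + P2.2 * (V ω ^ 2 - 1) : ℝ) := by
          rw [h, hP2]; ring
        simp only [hh1def, hh0def, h, hgdef, zero_ne_one, if_false, if_true, one_smul,
          zero_smul, zero_add]
        congr 1
        simp only [hP2]
        push_cast
        ring
      · have he : (t.1 * ((y ω - p) * V ω) + t.2 * ((y ω - p) ^ 2 * (V ω ^ 2 - 1)) : ℝ)
            = (P1.1 * V ω + P1.2 * (V ω ^ 2 - 1) : ℝ) := by
          rw [h, hP1]; ring
        simp only [hh1def, hh0def, h, hgdef, if_true, one_smul, zero_smul, add_zero]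
        congr 1
        simp only [hP1]
        push_cast
        ring
    have hb1 : ∀ ω, ‖h1 (y ω) • g P1 (V ω)‖ ≤ 1 := by
      intro ω
      rw [norm_smul, hg_norm]
      by_cases hω : y ω = 1 <;> simp [hh1def, hω]
    have hb0 : ∀ ω, ‖h0 (y ω) • g P2 (V ω)‖ ≤ 1 := by
      intro ω
      rw [norm_smul, hg_norm]
      by_cases hω : y ω = 1 <;> simp [hh0def, hω]
    have hi1 : Integrable (fun ω => h1 (y ω) • g P1 (V ω)) μ :=
      hInt _ (((hh1.comp hy)).smul (hgm1.comp hV)) hb1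
    have hi0 : Integrable (fun ω => h0 (y ω) • g P2 (V ω)) μ :=
      hInt _ (((hh0.comp hy)).smul (hgm2.comp hV)) hb0
    have e1 : ∫ ω, h1 (y ω) • g P1 (V ω) ∂μ
        = (∫ ω, h1 (y ω) ∂μ) • ∫ ω, g P1 (V ω) ∂μ := by
      refine indep_smul_integral ?_ (hh1.comp hy).aestronglyMeasurable
        ((hgm1.comp hV)).aestronglyMeasurable (hGi P1) hi1
      exact hindep.comp hh1 hgm1
    have e0 : ∫ ω, h0 (y ω) • g P2 (V ω) ∂μ
        = (∫ ω, h0 (y ω) ∂μ) • ∫ ω, g P2 (V ω) ∂μ := by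
      refine indep_smul_integral ?_ (hh0.comp hy).aestronglyMeasurable
        ((hgm2.comp hV)).aestronglyMeasurable (hGi P2) hi0
      exact hindep.comp hh0 hgm2
    rw [integral_congr_ae heq, integral_add hi1 hi0, e1, e0, hint_h1, hint_h0]
    calc ‖p • ∫ ω, g P1 (V ω) ∂μ + (1 - p) • ∫ ω, g P2 (V ω) ∂μ‖
        ≤ ‖p • ∫ ω, g P1 (V ω) ∂μ‖ + ‖(1 - p) • ∫ ω, g P2 (V ω) ∂μ‖ := norm_add_le _ _
      _ = p * ‖∫ ω, g P1 (V ω) ∂μ‖ + (1 - p) * ‖∫ ω, g P2 (V ω) ∂μ‖ := by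
          rw [norm_smul, norm_smul, Real.norm_eq_abs, Real.norm_eq_abs,
            abs_of_pos hp0, abs_of_pos hq0]
      _ = p * f P1 + (1 - p) * f P2 := rfl
  -- filter facts
  have hlift : Tendsto (fun r : ℝ => ((r, 0) : ℝ × ℝ)) atTop l := by
    rw [hl, tendsto_comap_iff]
    have : ((fun t : ℝ × ℝ => ‖t‖) ∘ fun r : ℝ => ((r, 0) : ℝ × ℝ)) = fun r => |r| := by
      ext r
      simp [Function.comp, Prod.norm_def, Real.norm_eq_abs]
    rw [this]
    exact tendsto_abs_atTop_atTop
  haveI hlne : l.NeBot := Filter.neBot_of_le hlift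
  have hscale : ∀ a b : ℝ, a ≠ 0 → b ≠ 0 →
      Tendsto (fun t : ℝ × ℝ => ((a * t.1, b * t.2) : ℝ × ℝ)) l l := by
    intro a b ha hb
    have ha' : 0 < |a| := abs_pos.mpr ha
    have hb' : 0 < |b| := abs_pos.mpr hb
    conv_rhs => rw [hl]
    rw [tendsto_comap_iff]
    have hmono : ∀ t : ℝ × ℝ, min |a| |b| * ‖t‖ ≤ ‖((a * t.1, b * t.2) : ℝ × ℝ)‖ := by
      intro t
      have hnorm : ‖t‖ = max |t.1| |t.2| := by simp [Prod.norm_def, Real.norm_eq_abs]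
      have hnorm2 : ‖((a * t.1, b * t.2) : ℝ × ℝ)‖ = max (|a| * |t.1|) (|b| * |t.2|) := by
        simp [Prod.norm_def, Real.norm_eq_abs, abs_mul]
      rw [hnorm, hnorm2]
      rcases le_total |t.1| |t.2| with h | h
      · rw [max_eq_right h]
        exact le_trans (mul_le_mul_of_nonneg_right (min_le_right _ _) (abs_nonneg _))
          (le_max_right _ _)
      · rw [max_eq_left h]
        exact le_trans (mul_le_mul_of_nonneg_right (min_le_left _ _) (abs_nonneg _))
          (le_max_left _ _)
    have htop : Tendsto (fun t : ℝ × ℝ => min |a| |b| * ‖t‖) l atTop :=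
      (tendsto_comap).const_mul_atTop (lt_min ha' hb')
    exact tendsto_atTop_mono hmono htop
  have hfle : ∀ s : ℝ × ℝ, f s ≤ 1 := by
    intro s
    rw [hf]
    refine le_trans (norm_integral_le_integral_norm _) ?_
    have hfun : (fun ω => ‖Complex.exp (Complex.I * ((s.1 * V ω + s.2 * (V ω ^ 2 - 1) : ℝ) : ℂ))‖)
        = fun _ => (1 : ℝ) := funext fun ω => hg_norm s (V ω)
    rw [hfun]
    simp
  have hbdd : IsBoundedUnder (· ≤ ·) l f := isBoundedUnder_of ⟨1, hfle⟩
  set c : ℝ := (limsup f l + 1) / 2 with hc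
  have hc1 : limsup f l < c := by rw [hc]; linarith [hCramerV]
  have hc2 : c < 1 := by rw [hc]; linarith [hCramerV]
  have hev : ∀ᶠ s in l, f s < c := eventually_lt_of_limsup_lt hc1 hbdd
  have hev1 : ∀ᶠ t in l, f ((1 - p) * t.1, (1 - p) ^ 2 * t.2) < c :=
    (hscale (1 - p) ((1 - p) ^ 2) hq0.ne' (pow_pos hq0 2).ne').eventually hev
  have hev2 : ∀ᶠ t in l, f (-p * t.1, p ^ 2 * t.2) < c :=
    (hscale (-p) (p ^ 2) (neg_ne_zero.mpr hp0.ne') (pow_pos hp0 2).ne').eventually hev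
  have hev' : ∀ᶠ t in l,
      ‖∫ ω, Complex.exp (Complex.I *
        ((t.1 * ((y ω - p) * V ω) + t.2 * ((y ω - p) ^ 2 * (V ω ^ 2 - 1)) : ℝ) : ℂ)) ∂μ‖ ≤ c := by
    filter_upwards [hev1, hev2] with t ht1 ht2
    calc ‖∫ ω, Complex.exp (Complex.I *
        ((t.1 * ((y ω - p) * V ω) + t.2 * ((y ω - p) ^ 2 * (V ω ^ 2 - 1)) : ℝ) : ℂ)) ∂μ‖
        ≤ p * f ((1 - p) * t.1, (1 - p) ^ 2 * t.2) + (1 - p) * f (-p * t.1, p ^ 2 * t.2) :=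
          claim t
      _ ≤ p * c + (1 - p) * c := add_le_add
          (mul_le_mul_of_nonneg_left ht1.le hp0.le)
          (mul_le_mul_of_nonneg_left ht2.le hq0.le)
      _ = c := by ring
  have hcob : IsCoboundedUnder (· ≤ ·) l (fun t : ℝ × ℝ =>
      ‖∫ ω, Complex.exp (Complex.I *
        ((t.1 * ((y ω - p) * V ω) + t.2 * ((y ω - p) ^ 2 * (V ω ^ 2 - 1)) : ℝ) : ℂ)) ∂μ‖) := by
    exact isCoboundedUnder_le_of_le l (x := 0) fun t => norm_nonneg _
  exact lt_of_le_of_lt (limsup_le_of_le hcob hev') hc2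
end
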